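/- arXiv:2510.20530 — 4 statements merged into one kernel-verified Lean document; each statement's English description precedes it below -/
import Mathlib

section
/- Fix an integer d ≥ 2 and a unit vector ψ ∈ ℂ^d, and set Q := (|ψ⟩⟨ψ|)ᵀ = |ψ̄⟩⟨ψ̄|, where ψ̄ is the entrywise complex conjugate of ψ. Define the performance operator on ℂ^d_I ⊗ ℂ^d_O ⊗ ℂ^d_F by Ω := (1/d) · Q_O ⊗ Φ_{IF} + (1/(d²−1)) · (1_d − Q/d)_O ⊗ (1 − Φ)_{IF}, where subscripts indicate the tensor factors on which each operator acts (Q and 1_d − Q/d on the factor O; Φ and 1 − Φ on the factors I, F). Then the maximum of Tr(S Ω) over all single-call deterministic superchannels S equals (2d+1)/(d² + d), and it is attained. This quantity is the optimal average fidelity of a deterministic single-call protocol transforming an arbitrary unknown U ∈ SU(d) into the state Uᵀ|ψ⟩⟨ψ|U̅ on the known pure state ψ. -/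
/-!
The value is computed by semidefinite-programming duality. With `Q = (|ψ⟩⟨ψ|)ᵀ` and
`Z = Q/d + (1 - Q)/(d² - 1)`, one has `Ω = 1_I ⊗ Z_O ⊗ 1_F - G` with the positive slack
`G = Q ⊗ (1 - Φ)/(d + 1) + (1 - Q) ⊗ Φ/(d² - 1)`. Since `Tr_F S = σ ⊗ 1` with `Tr σ = 1`, every
superchannel has `Tr(S (1 ⊗ Z ⊗ 1)) = Tr Z`, so `Tr(S Ω) = Tr Z - Tr(S G) ≤ Tr Z = 1/d + 1/(d + 1)`.
Equality holds for `S₀ = Q ⊗ Φ + (1 - Q) ⊗ (1 - Φ)/(d² - 1)`: it is a superchannel, and `S₀ G = 0`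
because `Q` and `Φ` are orthogonal projections.
-/

open Matrix Kronecker BigOperators ComplexOrder

noncomputable section

/-- Entrywise complex conjugate `U̅` of a matrix. -/
def mconj {d : ℕ} (U : Matrix (Fin d) (Fin d) ℂ) : Matrix (Fin d) (Fin d) ℂ :=
  U.map (starRingEnd ℂ)

/-- Rank-one outer product `|v⟩⟨v|`. -/
def outer {n : Type*} (v : n → ℂ) : Matrix n n ℂ :=
  Matrix.vecMulVec v (star v)

/-- Choi vector `|U⟩⟩ = Σ_i e_i ⊗ U e_i`. -/
def choiVec {d : ℕ} (U : Matrix (Fin d) (Fin d) ℂ) : Fin d × Fin d → ℂ :=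
  fun p => U p.2 p.1

/-- `|U⟩⟩⟨⟨U|`. -/
def choiProj {d : ℕ} (U : Matrix (Fin d) (Fin d) ℂ) :
    Matrix (Fin d × Fin d) (Fin d × Fin d) ℂ :=
  outer (choiVec U)

/-- Partial trace over the first tensor factor. -/
def ptrLeft {α β : Type*} [Fintype α] (S : Matrix (α × β) (α × β) ℂ) :
    Matrix β β ℂ :=
  fun b b' => ∑ a, S (a, b) (a, b')

/-- Partial trace over the second (last) tensor factor. -/
def ptrRight {α β : Type*} [Fintype β] (S : Matrix (α × β) (α × β) ℂ) :
    Matrix α α ℂ :=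
  fun a a' => ∑ b, S (a, b) (a', b)

/-- Action `S ⋆ U := Tr_{IO}[ S · (|U̅⟩⟩⟨⟨U̅|_{IO} ⊗ 1_F) ]` of a single-call
supermap `S` on `I ⊗ O ⊗ F` applied to the unitary channel given by `U`. -/
def act {d dF : ℕ}
    (S : Matrix ((Fin d × Fin d) × Fin dF) ((Fin d × Fin d) × Fin dF) ℂ)
    (U : Matrix (Fin d) (Fin d) ℂ) : Matrix (Fin dF) (Fin dF) ℂ :=
  ptrLeft (S * (choiProj (mconj U) ⊗ₖ (1 : Matrix (Fin dF) (Fin dF) ℂ)))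

/-- A single-call deterministic superchannel (channels-to-states):
`S ≥ 0` with `Tr_F(S) = σ ⊗ 1_d`, `σ ≥ 0`, `Tr σ = 1`. -/
def IsSuperchannel {d dF : ℕ}
    (S : Matrix ((Fin d × Fin d) × Fin dF) ((Fin d × Fin d) × Fin dF) ℂ) : Prop :=
  S.PosSemidef ∧
    ∃ σ : Matrix (Fin d) (Fin d) ℂ, σ.PosSemidef ∧ σ.trace = 1 ∧
      ptrRight S = σ ⊗ₖ (1 : Matrix (Fin d) (Fin d) ℂ)

/-- The maximally entangled unit vector `|φ⁺⟩ = (1/√d) Σ_i e_i ⊗ e_i`. -/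
def maxEntVec (d : ℕ) : Fin d × Fin d → ℂ :=
  fun p => if p.1 = p.2 then ((1 / Real.sqrt d : ℝ) : ℂ) else 0

/-- `Φ = |φ⁺⟩⟨φ⁺|`. -/
def Phi (d : ℕ) : Matrix (Fin d × Fin d) (Fin d × Fin d) ℂ := outer (maxEntVec d)

/-- The performance operator
`Ω = (1/d)·Q_O ⊗ Φ_{IF} + (1/(d²−1))·(1 − Q/d)_O ⊗ (1 − Φ)_{IF}` with
`Q = (|ψ⟩⟨ψ|)ᵀ`, written on the index order `(I × O) × F`. -/
def OmegaTrans {d : ℕ} (ψ : Fin d → ℂ) :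
    Matrix ((Fin d × Fin d) × Fin d) ((Fin d × Fin d) × Fin d) ℂ :=
  fun x y =>
    ((d : ℂ))⁻¹ * (outer ψ)ᵀ x.1.2 y.1.2 * Phi d (x.1.1, x.2) (y.1.1, y.2)
    + ((d : ℂ) ^ 2 - 1)⁻¹ *
        ((1 : Matrix (Fin d) (Fin d) ℂ) - ((d : ℂ))⁻¹ • (outer ψ)ᵀ) x.1.2 y.1.2 *
        ((1 : Matrix (Fin d × Fin d) (Fin d × Fin d) ℂ) - Phi d) (x.1.1, x.2) (y.1.1, y.2)

section KroneckerMid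

def kroneckerMidEquiv (n m p : Type*) : (n × m) × p ≃ m × (n × p) where
  toFun x := (x.1.2, (x.1.1, x.2))
  invFun y := ((y.2.1, y.1), y.2.2)
  left_inv _ := rfl
  right_inv _ := rfl

variable {R m n p : Type*}

/-- `A_O ⊗ B_{IF}` on the index order `(I × O) × F`. -/
def kroneckerMid [Mul R] (A : Matrix m m R) (B : Matrix (n × p) (n × p) R) :
    Matrix ((n × m) × p) ((n × m) × p) R :=
  (A ⊗ₖ B).submatrix (kroneckerMidEquiv n m p) (kroneckerMidEquiv n m p)

@[simp]
lemma kroneckerMid_apply [Mul R] (A : Matrix m m R) (B : Matrix (n × p) (n × p) R)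
    (x y : (n × m) × p) : kroneckerMid A B x y = A x.1.2 y.1.2 * B (x.1.1, x.2) (y.1.1, y.2) :=
  rfl

lemma kroneckerMid_mul [Fintype m] [Fintype n] [Fintype p] [CommSemiring R]
    (A A' : Matrix m m R) (B B' : Matrix (n × p) (n × p) R) :
    kroneckerMid A B * kroneckerMid A' B' = kroneckerMid (A * A') (B * B') := by
  rw [kroneckerMid, kroneckerMid, submatrix_mul_equiv, ← mul_kronecker_mul, kroneckerMid]

lemma trace_kroneckerMid [Fintype m] [Fintype n] [Fintype p] [CommSemiring R]
    (A : Matrix m m R) (B : Matrix (n × p) (n × p) R) :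
    (kroneckerMid A B).trace = A.trace * B.trace := by
  rw [← trace_kronecker]
  exact Equiv.sum_comp (kroneckerMidEquiv n m p) fun j => (A ⊗ₖ B) j j

@[simp]
lemma kroneckerMid_zero_left [MulZeroClass R] (B : Matrix (n × p) (n × p) R) :
    kroneckerMid (0 : Matrix m m R) B = 0 := by
  simp [kroneckerMid]

@[simp]
lemma kroneckerMid_zero_right [MulZeroClass R] (A : Matrix m m R) :
    kroneckerMid A (0 : Matrix (n × p) (n × p) R) = 0 := by
  simp [kroneckerMid]

lemma kroneckerMid_one_right [MulZeroOneClass R] [DecidableEq n] [DecidableEq p]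
    (A : Matrix m m R) : kroneckerMid A 1 = ((1 : Matrix n n R) ⊗ₖ A) ⊗ₖ (1 : Matrix p p R) := by
  ext x y
  simp only [kroneckerMid_apply, kroneckerMap_apply, one_apply, Prod.mk.injEq]
  split_ifs <;> simp_all

lemma Matrix.PosSemidef.kroneckerMid [Finite m] [Finite n] [Finite p] {𝕜 : Type*} [RCLike 𝕜]
    {A : Matrix m m 𝕜} {B : Matrix (n × p) (n × p) 𝕜} (hA : A.PosSemidef) (hB : B.PosSemidef) :
    (kroneckerMid A B).PosSemidef :=
  (hA.kronecker hB).submatrix _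

end KroneckerMid

lemma Matrix.PosSemidef.trace_mul_nonneg {n : Type*} [Fintype n] [DecidableEq n]
    {M N : Matrix n n ℂ} (hM : M.PosSemidef) (hN : N.PosSemidef) : 0 ≤ (M * N).trace := by
  obtain ⟨C, rfl⟩ : ∃ C : Matrix n n ℂ, N = Cᴴ * C := by
    open scoped MatrixOrder in
    simpa [star_eq_conjTranspose] using CStarAlgebra.nonneg_iff_eq_star_mul_self.mp hN.nonneg
  rw [← Matrix.mul_assoc, trace_mul_cycle]
  exact (hM.mul_mul_conjTranspose_same C).trace_nonneg

section PartialTrace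

variable {α β : Type*} [Fintype β]

lemma ptrRight_add (M N : Matrix (α × β) (α × β) ℂ) :
    ptrRight (M + N) = ptrRight M + ptrRight N := by
  ext a a'
  simp [ptrRight, Finset.sum_add_distrib]

lemma ptrRight_sub (M N : Matrix (α × β) (α × β) ℂ) :
    ptrRight (M - N) = ptrRight M - ptrRight N := by
  ext a a'
  simp [ptrRight, Finset.sum_sub_distrib]

lemma ptrRight_one [DecidableEq α] [DecidableEq β] :
    ptrRight (1 : Matrix (α × β) (α × β) ℂ) = (Fintype.card β : ℂ) • 1 := by
  ext a a'
  by_cases h : a = a' <;> simp [ptrRight, one_apply, h]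

lemma trace_ptrRight [Fintype α] (M : Matrix (α × β) (α × β) ℂ) :
    (ptrRight M).trace = M.trace := by
  simp [trace, ptrRight, Fintype.sum_prod_type]

lemma trace_mul_kronecker_one [Fintype α] [DecidableEq β] (S : Matrix (α × β) (α × β) ℂ)
    (M : Matrix α α ℂ) : (S * (M ⊗ₖ (1 : Matrix β β ℂ))).trace = (ptrRight S * M).trace := by
  simp only [trace, diag_apply, mul_apply, Fintype.sum_prod_type, kroneckerMap_apply, one_apply,
    ptrRight, Finset.sum_mul, mul_ite, mul_one, mul_zero]
  refine Finset.sum_congr rfl fun a _ => ?_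
  rw [Finset.sum_comm]
  simp

lemma ptrRight_kroneckerMid {m n : Type*} (A : Matrix m m ℂ) (B : Matrix (n × β) (n × β) ℂ) :
    ptrRight (kroneckerMid A B) = ptrRight B ⊗ₖ A := by
  ext x y
  simp [ptrRight, Finset.mul_sum, mul_comm]

end PartialTrace

lemma IsSuperchannel.trace_mul_one_kronecker_kronecker_one {d dF : ℕ}
    {S : Matrix ((Fin d × Fin d) × Fin dF) ((Fin d × Fin d) × Fin dF) ℂ} (hS : IsSuperchannel S)
    (Z : Matrix (Fin d) (Fin d) ℂ) :
    (S * (((1 : Matrix (Fin d) (Fin d) ℂ) ⊗ₖ Z) ⊗ₖ (1 : Matrix (Fin dF) (Fin dF) ℂ))).trace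
      = Z.trace := by
  obtain ⟨-, σ, -, hσ, hS⟩ := hS
  rw [trace_mul_kronecker_one, hS, ← mul_kronecker_mul, Matrix.mul_one, Matrix.one_mul,
    trace_kronecker, hσ, one_mul]

theorem isGreatest_of_dual_certificate {d dF : ℕ}
    {Ω G S₀ : Matrix ((Fin d × Fin d) × Fin dF) ((Fin d × Fin d) × Fin dF) ℂ}
    {Z : Matrix (Fin d) (Fin d) ℂ} {z : ℝ}
    (hΩ : Ω = ((1 : Matrix (Fin d) (Fin d) ℂ) ⊗ₖ Z) ⊗ₖ 1 - G) (hG : G.PosSemidef)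
    (hZ : Z.trace = z) (hS₀ : IsSuperchannel S₀) (hS₀G : S₀ * G = 0) :
    IsGreatest {r : ℝ | ∃ S, IsSuperchannel S ∧ (S * Ω).trace = (r : ℂ)} z := by
  have hvalue : ∀ S, IsSuperchannel S → (S * Ω).trace = (z : ℂ) - (S * G).trace := fun S hS => by
    rw [hΩ, Matrix.mul_sub, trace_sub, hS.trace_mul_one_kronecker_kronecker_one, hZ]
  refine ⟨⟨S₀, hS₀, by rw [hvalue S₀ hS₀, hS₀G, trace_zero, sub_zero]⟩, ?_⟩
  rintro r ⟨S, hS, hr⟩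
  have hle : (r : ℂ) ≤ z := by
    rw [← hr, hvalue S hS]
    exact sub_le_self _ (hS.1.trace_mul_nonneg hG)
  exact_mod_cast hle

lemma IsStarProjection.posSemidef {n 𝕜 : Type*} [Fintype n] [RCLike 𝕜] {P : Matrix n n 𝕜}
    (hP : IsStarProjection P) : P.PosSemidef := by
  open scoped MatrixOrder in
  exact hP.nonneg.posSemidef

lemma trace_outer {n : Type*} [Fintype n] (v : n → ℂ) : (outer v).trace = star v ⬝ᵥ v := by
  rw [outer, trace_vecMulVec, dotProduct_comm]

lemma transpose_outer {n : Type*} (v : n → ℂ) : (outer v)ᵀ = outer (star v) := by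
  rw [outer, outer, transpose_vecMulVec, star_star]

lemma isStarProjection_outer {n : Type*} [Fintype n] {v : n → ℂ} (hv : star v ⬝ᵥ v = 1) :
    IsStarProjection (outer v) where
  isIdempotentElem := by
    rw [IsIdempotentElem, outer, vecMulVec_mul_vecMulVec, hv, one_smul]
  isSelfAdjoint := by
    rw [IsSelfAdjoint, outer, star_eq_conjTranspose, conjTranspose_vecMulVec, star_star]

lemma ptrRight_Phi (d : ℕ) : ptrRight (Phi d) = ((d : ℂ))⁻¹ • 1 := by
  ext i i'
  have hsq : ((Real.sqrt d : ℝ) : ℂ)⁻¹ * ((Real.sqrt d : ℝ) : ℂ)⁻¹ = ((d : ℂ))⁻¹ := by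
    rw [← mul_inv, ← Complex.ofReal_mul, Real.mul_self_sqrt (Nat.cast_nonneg d),
      Complex.ofReal_natCast]
  by_cases h : i = i'
  · subst h
    simp [ptrRight, Phi, outer, vecMulVec_apply, maxEntVec, hsq]
  · simp [ptrRight, Phi, outer, vecMulVec_apply, maxEntVec, Ne.symm h, one_apply_ne h]

lemma star_maxEntVec_dotProduct {d : ℕ} (hd : d ≠ 0) : star (maxEntVec d) ⬝ᵥ maxEntVec d = 1 := by
  rw [← trace_outer, ← Phi, ← trace_ptrRight, ptrRight_Phi, trace_smul, trace_one,
    Fintype.card_fin, smul_eq_mul, inv_mul_cancel₀ (Nat.cast_ne_zero.mpr hd)]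

lemma isStarProjection_Phi {d : ℕ} (hd : d ≠ 0) : IsStarProjection (Phi d) :=
  isStarProjection_outer (star_maxEntVec_dotProduct hd)

lemma natCast_sq_sub_one_ne_zero {d : ℕ} (hd : 2 ≤ d) : (d : ℂ) ^ 2 - 1 ≠ 0 := by
  rw [sub_ne_zero]
  norm_cast
  nlinarith

lemma inv_natCast_sq_sub_one_nonneg {d : ℕ} (hd : 0 < d) : (0 : ℂ) ≤ ((d : ℂ) ^ 2 - 1)⁻¹ := by
  rw [← Nat.cast_pow, ← Nat.cast_one, ← Nat.cast_sub (Nat.one_le_pow _ _ hd)]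
  positivity

section Certificate

variable {d : ℕ} (Q : Matrix (Fin d) (Fin d) ℂ)

def dualOptimum : Matrix (Fin d) (Fin d) ℂ :=
  ((d : ℂ))⁻¹ • Q + ((d : ℂ) ^ 2 - 1)⁻¹ • (1 - Q)

def dualSlack : Matrix ((Fin d × Fin d) × Fin d) ((Fin d × Fin d) × Fin d) ℂ :=
  kroneckerMid (((d : ℂ) + 1)⁻¹ • Q) (1 - Phi d)
    + kroneckerMid (((d : ℂ) ^ 2 - 1)⁻¹ • (1 - Q)) (Phi d)

def primalOptimum : Matrix ((Fin d × Fin d) × Fin d) ((Fin d × Fin d) × Fin d) ℂ :=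
  kroneckerMid Q (Phi d) + kroneckerMid (((d : ℂ) ^ 2 - 1)⁻¹ • (1 - Q)) (1 - Phi d)

lemma OmegaTrans_eq_sub (hd : 2 ≤ d) (ψ : Fin d → ℂ) :
    OmegaTrans ψ = ((1 : Matrix (Fin d) (Fin d) ℂ) ⊗ₖ dualOptimum (outer ψ)ᵀ) ⊗ₖ 1
      - dualSlack (outer ψ)ᵀ := by
  have hd_sq := natCast_sq_sub_one_ne_zero hd
  rw [← kroneckerMid_one_right]
  ext x y
  simp only [OmegaTrans, dualOptimum, dualSlack, kroneckerMid_apply, transpose_apply,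
    Matrix.add_apply, Matrix.sub_apply, Matrix.smul_apply, smul_eq_mul]
  field_simp
  ring

variable {Q}

lemma trace_dualOptimum (hd : 2 ≤ d) (hQ : Q.trace = 1) :
    (dualOptimum Q).trace = ((2 * d + 1) / ((d : ℝ) ^ 2 + d) : ℝ) := by
  have hd_sq := natCast_sq_sub_one_ne_zero hd
  rw [dualOptimum, trace_add, trace_smul, trace_smul, trace_sub, hQ, trace_one, Fintype.card_fin]
  simp only [smul_eq_mul]
  push_cast
  field_simp
  ring

lemma dualSlack_posSemidef (hd : 0 < d) (hQ : IsStarProjection Q) :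
    (dualSlack Q).PosSemidef := by
  have hΦ := isStarProjection_Phi hd.ne'
  refine .add (.kroneckerMid (hQ.posSemidef.smul ?_) hΦ.one_sub.posSemidef)
    (.kroneckerMid (hQ.one_sub.posSemidef.smul ?_) hΦ.posSemidef)
  · positivity
  · exact inv_natCast_sq_sub_one_nonneg hd

lemma primalOptimum_mul_dualSlack (hd : d ≠ 0) (hQ : IsStarProjection Q) :
    primalOptimum Q * dualSlack Q = 0 := by
  have hΦ := isStarProjection_Phi hd
  simp [primalOptimum, dualSlack, mul_add, add_mul, kroneckerMid_mul,
    hQ.mul_one_sub_self, hQ.one_sub_mul_self, hΦ.mul_one_sub_self, hΦ.one_sub_mul_self]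

lemma primalOptimum_isSuperchannel (hd : 2 ≤ d) (hQ : IsStarProjection Q) :
    IsSuperchannel (primalOptimum Q) := by
  have hd0 : (d : ℂ) ≠ 0 := by norm_cast; omega
  have hd_sq := natCast_sq_sub_one_ne_zero hd
  have hΦ := isStarProjection_Phi (d := d) (by omega)
  refine ⟨.add (.kroneckerMid hQ.posSemidef hΦ.posSemidef)
    (.kroneckerMid (hQ.one_sub.posSemidef.smul ?_) hΦ.one_sub.posSemidef), ((d : ℂ))⁻¹ • 1,
    PosSemidef.one.smul ?_, ?_, ?_⟩
  · exact inv_natCast_sq_sub_one_nonneg (by omega)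
  · positivity
  · rw [trace_smul, trace_one, Fintype.card_fin, smul_eq_mul, inv_mul_cancel₀ hd0]
  · rw [primalOptimum, ptrRight_add, ptrRight_kroneckerMid, ptrRight_kroneckerMid, ptrRight_sub,
      ptrRight_Phi, ptrRight_one, Fintype.card_fin]
    ext ⟨i, o⟩ ⟨i', o'⟩
    simp only [Matrix.add_apply, Matrix.sub_apply, Matrix.smul_apply, kroneckerMap_apply, one_apply,
      smul_eq_mul, mul_ite, ite_mul, mul_one, mul_zero, zero_mul]
    split_ifs <;> field_simp <;> ring

end Certificate

/-- **Optimal deterministic (approximate) unitary transposition on a known pure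
state, single call.** The maximum of `Tr(S Ω)` over single-call deterministic
superchannels `S` is `(2d+1)/(d² + d)`, and it is attained. -/
theorem deterministic_transposition_optimal_fidelity
    (d : ℕ) (hd : 2 ≤ d) (ψ : Fin d → ℂ) (hψ : star ψ ⬝ᵥ ψ = 1) :
    IsGreatest
      {r : ℝ |
        ∃ S : Matrix ((Fin d × Fin d) × Fin d) ((Fin d × Fin d) × Fin d) ℂ,
          IsSuperchannel S ∧ (S * OmegaTrans ψ).trace = (r : ℂ)}
      ((2 * d + 1) / ((d : ℝ) ^ 2 + d)) := by
  have hQ : IsStarProjection (outer ψ)ᵀ := by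
    rw [transpose_outer]
    exact isStarProjection_outer (by rwa [star_star, dotProduct_comm])
  have hQ_trace : (outer ψ)ᵀ.trace = 1 := by rw [trace_transpose, trace_outer, hψ]
  exact isGreatest_of_dual_certificate (OmegaTrans_eq_sub hd ψ)
    (dualSlack_posSemidef (by omega) hQ) (trace_dualOptimum hd hQ_trace)
    (primalOptimum_isSuperchannel hd hQ) (primalOptimum_mul_dualSlack (by omega) hQ)
end
end

section
/- Let d ≥ 1 and m ≥ 1 be integers, H₁ = ℂ^m, H₂ = H₃ = ℂ^d, and let ρ be an arbitrary complex matrix on H₁ ⊗ H₂. Let P^S and P^A be the symmetric and antisymmetric projectors on H₂ ⊗ H₃. Then, as matrices on H₁ ⊗ H₃: ρ * P^S = (Tr₂(ρ) ⊗ 1_d + ρ̂)/2 and ρ * P^A = (Tr₂(ρ) ⊗ 1_d − ρ̂)/2, where Tr₂(ρ) is the partial trace of ρ over H₂ and ρ̂ is the matrix on H₁ ⊗ H₃ with entries ρ̂_{(a,c),(a',c')} = ρ_{(a,c'),(a',c)} (ρ relabelled from H₁ ⊗ H₂ to H₁ ⊗ H₃ and partially transposed on the second factor). -/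
open Matrix Kronecker BigOperators ComplexOrder

noncomputable section

/-- The flip (SWAP) operator on `ℂ^d ⊗ ℂ^d`. -/
def swapMat (d : ℕ) : Matrix (Fin d × Fin d) (Fin d × Fin d) ℂ :=
  fun x y => if x.1 = y.2 ∧ x.2 = y.1 then 1 else 0

/-- Projector onto the symmetric subspace, `P^S = (1 + SWAP)/2`. -/
def Psym (d : ℕ) : Matrix (Fin d × Fin d) (Fin d × Fin d) ℂ :=
  (2 : ℂ)⁻¹ • ((1 : Matrix (Fin d × Fin d) (Fin d × Fin d) ℂ) + swapMat d)

/-- Projector onto the antisymmetric subspace, `P^A = (1 − SWAP)/2`. -/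
def Pasym (d : ℕ) : Matrix (Fin d × Fin d) (Fin d × Fin d) ℂ :=
  (2 : ℂ)⁻¹ • ((1 : Matrix (Fin d × Fin d) (Fin d × Fin d) ℂ) - swapMat d)

/-- The link product `A * B := Tr₂[(A^{T₂} ⊗ 1₃)(1₁ ⊗ B)]`, written entrywise:
`(A * B)_{(a,c),(a',c')} = Σ_{b,b₁} A_{(a,b₁),(a',b)} B_{(b₁,c),(b,c')}`. -/
def link {m d e : ℕ} (A : Matrix (Fin m × Fin d) (Fin m × Fin d) ℂ)
    (B : Matrix (Fin d × Fin e) (Fin d × Fin e) ℂ) :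
    Matrix (Fin m × Fin e) (Fin m × Fin e) ℂ :=
  fun x y => ∑ b : Fin d, ∑ b₁ : Fin d, A (x.1, b₁) (y.1, b) * B (b₁, x.2) (b, y.2)

/-- `ρ̂`: the matrix `ρ` relabelled from `H₁ ⊗ H₂` to `H₁ ⊗ H₃` and partially
transposed on the second factor: `ρ̂_{(a,c),(a',c')} = ρ_{(a,c'),(a',c)}`. -/
def hatM {m d : ℕ} (ρ : Matrix (Fin m × Fin d) (Fin m × Fin d) ℂ) :
    Matrix (Fin m × Fin d) (Fin m × Fin d) ℂ :=
  fun x y => ρ (x.1, y.2) (y.1, x.2)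

lemma link_one {m d : ℕ} (ρ : Matrix (Fin m × Fin d) (Fin m × Fin d) ℂ) :
    link ρ (1 : Matrix (Fin d × Fin d) (Fin d × Fin d) ℂ) =
      ptrRight ρ ⊗ₖ (1 : Matrix (Fin d) (Fin d) ℂ) := by
  ext x y
  simp only [link, Matrix.one_apply, Prod.mk.injEq, kroneckerMap_apply, ptrRight,
    Finset.sum_mul, mul_ite, mul_one, mul_zero]
  rw [Finset.sum_comm]
  simp [Finset.sum_ite_eq', ite_and, Finset.mul_sum]

lemma link_swap {m d : ℕ} (ρ : Matrix (Fin m × Fin d) (Fin m × Fin d) ℂ) :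
    link ρ (swapMat d) = hatM ρ := by
  ext x y
  simp [link, swapMat, hatM, ite_and, Finset.sum_ite_eq', Finset.sum_ite_eq]

/-- **Link product with the symmetric and antisymmetric projectors.**
`ρ * P^S = (Tr₂(ρ) ⊗ 1 + ρ̂)/2` and `ρ * P^A = (Tr₂(ρ) ⊗ 1 − ρ̂)/2`. -/
theorem link_with_sym_asym_projectors
    (m d : ℕ) (hm : 1 ≤ m) (hd : 1 ≤ d)
    (ρ : Matrix (Fin m × Fin d) (Fin m × Fin d) ℂ) :
    link ρ (Psym d) =
      (2 : ℂ)⁻¹ • (ptrRight ρ ⊗ₖ (1 : Matrix (Fin d) (Fin d) ℂ) + hatM ρ) ∧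
    link ρ (Pasym d) =
      (2 : ℂ)⁻¹ • (ptrRight ρ ⊗ₖ (1 : Matrix (Fin d) (Fin d) ℂ) - hatM ρ) := by
  have hone := link_one ρ
  have hsw := link_swap ρ
  have hlin : ∀ (B C : Matrix (Fin d × Fin d) (Fin d × Fin d) ℂ),
      link ρ ((2:ℂ)⁻¹ • B) = (2:ℂ)⁻¹ • link ρ B := by
    intro B C; ext x y
    simp [link, Finset.mul_sum, mul_left_comm, mul_comm]
  have hadd : ∀ (B C : Matrix (Fin d × Fin d) (Fin d × Fin d) ℂ),
      link ρ (B + C) = link ρ B + link ρ C := by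
    intro B C; ext x y
    simp [link, mul_add, Finset.sum_add_distrib]
  have hsub : ∀ (B C : Matrix (Fin d × Fin d) (Fin d × Fin d) ℂ),
      link ρ (B - C) = link ρ B - link ρ C := by
    intro B C; ext x y
    simp [link, mul_sub, Finset.sum_sub_distrib]
  constructor
  · rw [Psym, hlin _ 0, hadd, hone, hsw]
  · rw [Pasym, hlin _ 0, hsub, hone, hsw]
end
end

section
/- Fix integers d ≥ 2 and k ≥ 1, a real number p, and a map f from SU(d) to the d×d unitary matrices satisfying either f(UV) = f(U)f(V) for all U, V ∈ SU(d) (homomorphism) or f(UV) = f(V)f(U) for all U, V ∈ SU(d) (antihomomorphism). Let ψ, ψ' ∈ ℂ^d be unit vectors such that ψ' = f(V)ψ for some V ∈ SU(d). If there exists a parallel k-call probabilistic protocol (S, S_ch) with S ⋆ U^{⊗k} = p · f(U)|ψ⟩⟨ψ|f(U)† for all U ∈ SU(d), then there exists a parallel k-call probabilistic protocol (S', S'_ch) with S' ⋆ U^{⊗k} = p · f(U)|ψ'⟩⟨ψ'|f(U)† for all U ∈ SU(d). In particular, the achievable success probabilities of exactly implementing f(U) on a known pure state do not depend on the choice of that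 state. -/
open Matrix Kronecker BigOperators ComplexOrder

noncomputable section

/-- `(|U⟩⟩⟨⟨U|)^{⊗k}`, where the `j`-th copy acts on the `j`-th factor of `I`
and the `j`-th factor of `O`; `(ℂ^d)^{⊗k}` is indexed by `Fin k → Fin d`. -/
def choiProjK {d : ℕ} (k : ℕ) (U : Matrix (Fin d) (Fin d) ℂ) :
    Matrix ((Fin k → Fin d) × (Fin k → Fin d)) ((Fin k → Fin d) × (Fin k → Fin d)) ℂ :=
  fun x y => ∏ j, choiProj U (x.1 j, x.2 j) (y.1 j, y.2 j)

/-- Action `S ⋆ U^{⊗k} := Tr_{IO}[ S · ((|U̅⟩⟩⟨⟨U̅|)^{⊗k}_{IO} ⊗ 1_F) ]` of a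
parallel `k`-call supermap on the unitary channel given by `U`. -/
def actK {d k : ℕ}
    (S : Matrix (((Fin k → Fin d) × (Fin k → Fin d)) × Fin d)
        (((Fin k → Fin d) × (Fin k → Fin d)) × Fin d) ℂ)
    (U : Matrix (Fin d) (Fin d) ℂ) : Matrix (Fin d) (Fin d) ℂ :=
  ptrLeft (S * (choiProjK k (mconj U) ⊗ₖ (1 : Matrix (Fin d) (Fin d) ℂ)))

/-- A parallel `k`-call probabilistic protocol: `0 ≤ S ≤ S_ch` with
`Tr_F(S_ch) = σ ⊗ 1_O`, `σ ≥ 0` on `(ℂ^d)^{⊗k}`, `Tr σ = 1`. -/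
def IsProtocolK {d k : ℕ}
    (S Sch : Matrix (((Fin k → Fin d) × (Fin k → Fin d)) × Fin d)
        (((Fin k → Fin d) × (Fin k → Fin d)) × Fin d) ℂ) : Prop :=
  S.PosSemidef ∧ (Sch - S).PosSemidef ∧
    ∃ σ : Matrix (Fin k → Fin d) (Fin k → Fin d) ℂ, σ.PosSemidef ∧ σ.trace = 1 ∧
      ptrRight Sch = σ ⊗ₖ (1 : Matrix (Fin k → Fin d) (Fin k → Fin d) ℂ)

/- ### auxiliary lemmas -/

lemma kron_conjT {α β : Type*} [Fintype α] [Fintype β]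
    (A : Matrix α α ℂ) (B : Matrix β β ℂ) : (A ⊗ₖ B)ᴴ = Aᴴ ⊗ₖ Bᴴ := by
  ext ⟨a, b⟩ ⟨a', b'⟩
  simp [conjTranspose_apply, kroneckerMap_apply, star_mul', mul_comm]

lemma outer_mulVec {n : Type*} [Fintype n] (M : Matrix n n ℂ) (v : n → ℂ) :
    outer (M.mulVec v) = M * outer v * Mᴴ := by
  ext a b
  simp only [outer, vecMulVec_apply, Pi.star_apply, Matrix.mul_apply, mulVec, dotProduct,
    conjTranspose_apply, star_sum, star_mul', Finset.mul_sum, Finset.sum_mul]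
  exact Finset.sum_congr rfl fun j _ => Finset.sum_congr rfl fun i _ => by ring

def pm {d : ℕ} (k : ℕ) (B : Matrix (Fin d) (Fin d) ℂ) :
    Matrix (Fin k → Fin d) (Fin k → Fin d) ℂ :=
  fun x y => ∏ j, B (x j) (y j)

def pk2 {d : ℕ} (k : ℕ) (D : Matrix (Fin d × Fin d) (Fin d × Fin d) ℂ) :
    Matrix ((Fin k → Fin d) × (Fin k → Fin d)) ((Fin k → Fin d) × (Fin k → Fin d)) ℂ :=
  fun g g' => ∏ j, D (g.1 j, g.2 j) (g'.1 j, g'.2 j)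

lemma choiProjK_eq_pk2 {d k : ℕ} (U : Matrix (Fin d) (Fin d) ℂ) :
    choiProjK k U = pk2 k (choiProj U) := rfl

lemma sum_fun_prod {k : ℕ} {κ : Type*} [Fintype κ] (F : Fin k → κ → ℂ) :
    ∑ u : Fin k → κ, ∏ j, F j (u j) = ∏ j, ∑ a, F j a := by
  rw [Finset.prod_univ_sum, Fintype.piFinset_univ]

lemma pm_mul {d k : ℕ} (B C : Matrix (Fin d) (Fin d) ℂ) :
    pm k B * pm k C = pm k (B * C) := by
  ext x y
  simp only [Matrix.mul_apply, pm, ← Finset.prod_mul_distrib]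
  exact sum_fun_prod fun j a => B (x j) a * C a (y j)

lemma pm_one {d k : ℕ} : pm k (1 : Matrix (Fin d) (Fin d) ℂ) = 1 := by
  ext x y
  by_cases h : x = y
  · subst h; simp [pm, Matrix.one_apply]
  · rw [Matrix.one_apply_ne h]
    obtain ⟨j, hj⟩ := Function.ne_iff.mp h
    exact Finset.prod_eq_zero (Finset.mem_univ j) (Matrix.one_apply_ne hj)

lemma pm_conjT {d k : ℕ} (B : Matrix (Fin d) (Fin d) ℂ) : (pm k B)ᴴ = pm k Bᴴ := by
  ext x y
  simp [pm, conjTranspose_apply, star_prod]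

set_option maxHeartbeats 1000000 in
lemma pk2_mul {d k : ℕ} (D E : Matrix (Fin d × Fin d) (Fin d × Fin d) ℂ) :
    pk2 k D * pk2 k E = pk2 k (D * E) := by
  ext ⟨x, y⟩ ⟨x', y'⟩
  simp only [Matrix.mul_apply, pk2, Fintype.sum_prod_type, ← Finset.prod_mul_distrib]
  trans (∑ u : Fin k → Fin d, ∏ j, ∑ b, D (x j, y j) (u j, b) * E (u j, b) (x' j, y' j))
  · exact Finset.sum_congr rfl fun u _ =>
      sum_fun_prod (fun j b => D (x j, y j) (u j, b) * E (u j, b) (x' j, y' j))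
  · exact sum_fun_prod fun j a => ∑ b, D (x j, y j) (a, b) * E (a, b) (x' j, y' j)

lemma pk2_conjT {d k : ℕ} (D : Matrix (Fin d × Fin d) (Fin d × Fin d) ℂ) :
    (pk2 k D)ᴴ = pk2 k Dᴴ := by
  ext ⟨x, y⟩ ⟨x', y'⟩
  simp [pk2, conjTranspose_apply, star_prod]

lemma pk2_kron {d k : ℕ} (B C : Matrix (Fin d) (Fin d) ℂ) :
    pk2 k (B ⊗ₖ C) = pm k B ⊗ₖ pm k C := by
  ext ⟨x, y⟩ ⟨x', y'⟩
  simp [pk2, pm, kroneckerMap_apply, Finset.prod_mul_distrib]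

lemma ptrLeft_kron_comm {α β : Type*} [Fintype α] [Fintype β] [DecidableEq α] [DecidableEq β]
    (M : Matrix α α ℂ) (X : Matrix (α × β) (α × β) ℂ) :
    ptrLeft ((M ⊗ₖ (1 : Matrix β β ℂ)) * X) = ptrLeft (X * (M ⊗ₖ (1 : Matrix β β ℂ))) := by
  funext b b'
  simp only [ptrLeft, Matrix.mul_apply, Fintype.sum_prod_type, kroneckerMap_apply,
    Matrix.one_apply, mul_ite, ite_mul, mul_one, mul_zero, one_mul, zero_mul,
    Finset.sum_ite_eq, Finset.sum_ite_eq', Finset.mem_univ, if_true]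
  rw [Finset.sum_comm]
  exact Finset.sum_congr rfl fun _ _ => Finset.sum_congr rfl fun _ _ => mul_comm _ _

lemma ptrRight_mul_left {α β : Type*} [Fintype α] [Fintype β] [DecidableEq β]
    (M : Matrix α α ℂ) (X : Matrix (α × β) (α × β) ℂ) :
    ptrRight ((M ⊗ₖ (1 : Matrix β β ℂ)) * X) = M * ptrRight X := by
  funext a a'
  simp only [ptrRight, Matrix.mul_apply, Fintype.sum_prod_type, kroneckerMap_apply,
    Matrix.one_apply, mul_ite, ite_mul, mul_one, mul_zero, one_mul, zero_mul,
    Finset.sum_ite_eq, Finset.sum_ite_eq', Finset.mem_univ, if_true, Finset.mul_sum]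
  exact Finset.sum_comm

lemma ptrRight_mul_right {α β : Type*} [Fintype α] [Fintype β] [DecidableEq β]
    (N : Matrix α α ℂ) (X : Matrix (α × β) (α × β) ℂ) :
    ptrRight (X * (N ⊗ₖ (1 : Matrix β β ℂ))) = ptrRight X * N := by
  funext a a'
  simp only [ptrRight, Matrix.mul_apply, Fintype.sum_prod_type, kroneckerMap_apply,
    Matrix.one_apply, mul_ite, ite_mul, mul_one, mul_zero, one_mul, zero_mul,
    Finset.sum_ite_eq, Finset.sum_ite_eq', Finset.mem_univ, if_true, Finset.sum_mul]
  exact Finset.sum_comm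

lemma choiVec_hom {d : ℕ} (U V : Matrix (Fin d) (Fin d) ℂ) :
    choiVec (mconj (U * V)) =
      (Vᴴ ⊗ₖ (1 : Matrix (Fin d) (Fin d) ℂ)).mulVec (choiVec (mconj U)) := by
  funext q
  obtain ⟨i, j⟩ := q
  simp only [choiVec, mconj, Matrix.map_apply, Matrix.mul_apply, mulVec, dotProduct,
    Fintype.sum_prod_type, kroneckerMap_apply, conjTranspose_apply, Matrix.one_apply,
    starRingEnd_apply, star_sum, star_mul', mul_ite, ite_mul, mul_one, mul_zero, one_mul,
    zero_mul, Finset.sum_ite_eq, Finset.sum_ite_eq', Finset.mem_univ, if_true]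
  exact Finset.sum_congr rfl fun a _ => by ring

lemma choiVec_anti {d : ℕ} (U V : Matrix (Fin d) (Fin d) ℂ) :
    choiVec (mconj (V * U)) =
      ((1 : Matrix (Fin d) (Fin d) ℂ) ⊗ₖ mconj V).mulVec (choiVec (mconj U)) := by
  funext q
  obtain ⟨i, j⟩ := q
  simp only [choiVec, mconj, Matrix.map_apply, Matrix.mul_apply, mulVec, dotProduct,
    Fintype.sum_prod_type, kroneckerMap_apply, Matrix.one_apply,
    starRingEnd_apply, star_sum, star_mul', mul_ite, ite_mul, mul_one, mul_zero, one_mul,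
    zero_mul, Finset.mem_univ, if_true]
  conv_rhs => rw [Finset.sum_comm]
  simp [Finset.sum_ite_eq]

lemma hkey_hom {d : ℕ} (U V : Matrix (Fin d) (Fin d) ℂ) :
    (V ⊗ₖ (1 : Matrix (Fin d) (Fin d) ℂ))ᴴ * choiProj (mconj U) *
      (V ⊗ₖ (1 : Matrix (Fin d) (Fin d) ℂ)) = choiProj (mconj (U * V)) := by
  conv_rhs => rw [choiProj, choiVec_hom U V, outer_mulVec]
  rw [kron_conjT, conjTranspose_one, kron_conjT, conjTranspose_one,
    conjTranspose_conjTranspose]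
  rfl

lemma transpose_conjT_eq_mconj {d : ℕ} (V : Matrix (Fin d) (Fin d) ℂ) :
    (Vᵀ)ᴴ = mconj V := by
  ext i j
  rfl

lemma hkey_anti {d : ℕ} (U V : Matrix (Fin d) (Fin d) ℂ) :
    ((1 : Matrix (Fin d) (Fin d) ℂ) ⊗ₖ Vᵀ)ᴴ * choiProj (mconj U) *
      ((1 : Matrix (Fin d) (Fin d) ℂ) ⊗ₖ Vᵀ) = choiProj (mconj (V * U)) := by
  conv_rhs => rw [choiProj, choiVec_anti U V, outer_mulVec]
  rw [kron_conjT, conjTranspose_one, transpose_conjT_eq_mconj, kron_conjT,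
    conjTranspose_one, ← transpose_conjT_eq_mconj, conjTranspose_conjTranspose]
  rfl

set_option maxHeartbeats 1000000 in
lemma conj_protocol {d k : ℕ}
    (B C : Matrix (Fin d) (Fin d) ℂ)
    (hB : Bᴴ * B = 1) (hC : C * Cᴴ = 1)
    (g : Matrix (Fin d) (Fin d) ℂ → Matrix (Fin d) (Fin d) ℂ)
    (hkey : ∀ U, (B ⊗ₖ C)ᴴ * choiProj (mconj U) * (B ⊗ₖ C) = choiProj (mconj (g U)))
    (S Sch : Matrix (((Fin k → Fin d) × (Fin k → Fin d)) × Fin d)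
        (((Fin k → Fin d) × (Fin k → Fin d)) × Fin d) ℂ)
    (hp : IsProtocolK S Sch) :
    ∃ S' Sch' : Matrix (((Fin k → Fin d) × (Fin k → Fin d)) × Fin d)
        (((Fin k → Fin d) × (Fin k → Fin d)) × Fin d) ℂ,
      IsProtocolK S' Sch' ∧ ∀ U, actK S' U = actK S (g U) := by
  obtain ⟨hS, hdiff, σ, hσ1, hσ2, hσ3⟩ := hp
  set A : Matrix ((Fin k → Fin d) × (Fin k → Fin d)) ((Fin k → Fin d) × (Fin k → Fin d)) ℂ :=
    pk2 k (B ⊗ₖ C) with hA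
  set E : Matrix (((Fin k → Fin d) × (Fin k → Fin d)) × Fin d)
      (((Fin k → Fin d) × (Fin k → Fin d)) × Fin d) ℂ :=
    A ⊗ₖ (1 : Matrix (Fin d) (Fin d) ℂ) with hE
  have hEH : Eᴴ = Aᴴ ⊗ₖ (1 : Matrix (Fin d) (Fin d) ℂ) := by
    rw [hE, kron_conjT, conjTranspose_one]
  have hkeyK : ∀ U, Aᴴ * choiProjK k (mconj U) * A = choiProjK k (mconj (g U)) := by
    intro U
    rw [hA, pk2_conjT, choiProjK_eq_pk2, choiProjK_eq_pk2, pk2_mul, pk2_mul]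
    exact congrArg (pk2 k) (hkey U)
  refine ⟨E * S * Eᴴ, E * Sch * Eᴴ,
    ⟨hS.mul_mul_conjTranspose_same E, ?_, pm k B * σ * (pm k B)ᴴ,
      hσ1.mul_mul_conjTranspose_same (pm k B), ?_, ?_⟩, ?_⟩
  · have : E * Sch * Eᴴ - E * S * Eᴴ = E * (Sch - S) * Eᴴ := by
      rw [Matrix.mul_sub, Matrix.sub_mul]
    rw [this]
    exact hdiff.mul_mul_conjTranspose_same E
  · rw [Matrix.trace_mul_cycle, pm_conjT, pm_mul, hB, pm_one, Matrix.one_mul]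
    exact hσ2
  · rw [hEH, ptrRight_mul_right, ptrRight_mul_left, hσ3, hA, pk2_kron, kron_conjT,
      ← Matrix.mul_kronecker_mul, ← Matrix.mul_kronecker_mul, Matrix.mul_one,
      pm_conjT, pm_conjT, pm_mul, hC, pm_one, ← pm_conjT]
  · intro U
    rw [actK, actK]
    rw [Matrix.mul_assoc, Matrix.mul_assoc, hE, ptrLeft_kron_comm]
    rw [← hE, Matrix.mul_assoc, Matrix.mul_assoc, hEH, hE,
      ← Matrix.mul_kronecker_mul, Matrix.one_mul, ← Matrix.mul_kronecker_mul,
      Matrix.one_mul, ← Matrix.mul_assoc, hkeyK]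

lemma conjT_transpose_eq_mconj {d : ℕ} (V : Matrix (Fin d) (Fin d) ℂ) :
    (Vᴴ)ᵀ = mconj V := by
  ext i j
  rfl


/-- **Independence of the choice of known pure state.** If `f : SU(d) → U(d)` is a
homomorphism or antihomomorphism and `ψ' = f(V)ψ` for some `V ∈ SU(d)`, then any
parallel `k`-call protocol implementing `U ↦ p · f(U)|ψ⟩⟨ψ|f(U)†` for all
`U ∈ SU(d)` can be converted into one implementing `U ↦ p · f(U)|ψ'⟩⟨ψ'|f(U)†`
with the same probability `p`. -/
theorem independence_of_known_state
    (d k : ℕ) (hd : 2 ≤ d) (hk : 1 ≤ k) (p : ℝ)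
    (f : ∀ U : Matrix (Fin d) (Fin d) ℂ, U ∈ Matrix.specialUnitaryGroup (Fin d) ℂ →
      Matrix (Fin d) (Fin d) ℂ)
    (hfU : ∀ U hU, f U hU ∈ Matrix.unitaryGroup (Fin d) ℂ)
    (hf : (∀ U hU V hV, f (U * V) (mul_mem hU hV) = f U hU * f V hV) ∨
          (∀ U hU V hV, f (U * V) (mul_mem hU hV) = f V hV * f U hU))
    (ψ ψ' : Fin d → ℂ) (hψ : star ψ ⬝ᵥ ψ = 1) (hψ' : star ψ' ⬝ᵥ ψ' = 1)
    (hrel : ∃ V hV, ψ' = (f V hV).mulVec ψ)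
    (h : ∃ S Sch : Matrix (((Fin k → Fin d) × (Fin k → Fin d)) × Fin d)
          (((Fin k → Fin d) × (Fin k → Fin d)) × Fin d) ℂ,
        IsProtocolK S Sch ∧
        ∀ U hU, actK S U = (p : ℂ) • (f U hU * outer ψ * (f U hU)ᴴ)) :
    ∃ S' Sch' : Matrix (((Fin k → Fin d) × (Fin k → Fin d)) × Fin d)
        (((Fin k → Fin d) × (Fin k → Fin d)) × Fin d) ℂ,
      IsProtocolK S' Sch' ∧
      ∀ U hU, actK S' U = (p : ℂ) • (f U hU * outer ψ' * (f U hU)ᴴ) := by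
  obtain ⟨S, Sch, hp, hact⟩ := h
  obtain ⟨V, hV, hψeq⟩ := hrel
  have hVu : V ∈ Matrix.unitaryGroup (Fin d) ℂ :=
    (Matrix.mem_specialUnitaryGroup_iff.mp hV).1
  have hV1 : Vᴴ * V = 1 := by
    simpa [Matrix.star_eq_conjTranspose] using Matrix.mem_unitaryGroup_iff'.mp hVu
  rcases hf with hf | hf
  · obtain ⟨S', Sch', hp', hact'⟩ :=
      conj_protocol (k := k) V (1 : Matrix (Fin d) (Fin d) ℂ) hV1 (by simp)
        (fun U => U * V) (fun U => hkey_hom U V) S Sch hp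
    refine ⟨S', Sch', hp', fun U hU => ?_⟩
    rw [hact' U, hact (U * V) (mul_mem hU hV), hf U hU V hV, hψeq, outer_mulVec]
    simp only [Matrix.conjTranspose_mul, Matrix.mul_assoc]
  · have hC : Vᵀ * (Vᵀ)ᴴ = 1 := by
      rw [transpose_conjT_eq_mconj, ← conjT_transpose_eq_mconj, ← Matrix.transpose_mul,
        hV1, Matrix.transpose_one]
    obtain ⟨S', Sch', hp', hact'⟩ :=
      conj_protocol (k := k) (1 : Matrix (Fin d) (Fin d) ℂ) Vᵀ (by simp) hC
        (fun U => V * U) (fun U => hkey_anti U V) S Sch hp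
    refine ⟨S', Sch', hp', fun U hU => ?_⟩
    rw [hact' U, hact (V * U) (mul_mem hV hU), hf V hV U hU, hψeq, outer_mulVec]
    simp only [Matrix.conjTranspose_mul, Matrix.mul_assoc]
end
end

section
/- Fix integers d ≥ 2 and k ≥ 1, a real number p, and a unit vector ψ ∈ ℂ^d. Suppose (S, S_ch) is a parallel k-call probabilistic protocol with S ⋆ U^{⊗k} = p · Uᵀ|ψ⟩⟨ψ|U̅ for all U ∈ SU(d). Then there exists a parallel k-call probabilistic protocol (S^c, S^c_ch) with S^c ⋆ U^{⊗k} = p · Uᵀ|ψ⟩⟨ψ|U̅ for all U ∈ SU(d) such that S^c commutes with U^{⊗k} ⊗ 1_O ⊗ U̅ for every U ∈ SU(d) (U^{⊗k} acting on the I factors, the identity on the O factors, and U̅ on the F factor). Hence, without loss of performance, probabilistic exact unitary transposition on a known pure state can be realized by a covariant protocol. -/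
open Matrix Kronecker BigOperators ComplexOrder

noncomputable section

/-- `U^{⊗k}` on `(ℂ^d)^{⊗k}` (indexed by `Fin k → Fin d`). -/
def UkMat {d : ℕ} (k : ℕ) (U : Matrix (Fin d) (Fin d) ℂ) :
    Matrix (Fin k → Fin d) (Fin k → Fin d) ℂ :=
  fun i i' => ∏ j, U (i j) (i' j)

/-- The symmetry operator `U^{⊗k}_I ⊗ 1_O ⊗ U̅_F`. -/
def symTrans {d : ℕ} (k : ℕ) (U : Matrix (Fin d) (Fin d) ℂ) :
    Matrix (((Fin k → Fin d) × (Fin k → Fin d)) × Fin d)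
      (((Fin k → Fin d) × (Fin k → Fin d)) × Fin d) ℂ :=
  (UkMat k U ⊗ₖ (1 : Matrix (Fin k → Fin d) (Fin k → Fin d) ℂ)) ⊗ₖ mconj U

/-!
Average the protocol over `SU(d)` against Haar measure: replace `S` and `S_ch` by
`∫ T_V S T_V† dV` and `∫ T_V S_ch T_V† dV`, where `T_V = V^{⊗k} ⊗ 1_O ⊗ V̅`.
Conjugation by `T_V` preserves positivity and the normalisation `Tr_F S_ch = σ ⊗ 1_O`, with `σ`
replaced by `V^{⊗k} σ V^{⊗k†}`, so the averages again form a protocol. The action of the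
conjugated `S` on `U` is `V̅ (S ⋆ (UV)^{⊗k}) Vᵀ`, and the target `U ↦ p Uᵀ|ψ⟩⟨ψ|U̅` is invariant
under exactly this change, so each conjugate, hence the average, implements the target. Left
invariance of Haar measure makes the average commute with every `T_U`.
-/

open MeasureTheory

attribute [local instance] Matrix.normedAddCommGroup Matrix.normedSpace

/- Instance search does not find this from the local instances above, because the product
topology on matrices is not reducibly the topology of `Matrix.normedAddCommGroup`. -/
instance {m n : Type*} [Fintype m] [Fintype n] : ContinuousENorm (Matrix m n ℂ) :=
  SeminormedAddGroup.toContinuousENorm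

theorem LinearMap.integral_comp_comm {E F : Type*} [NormedAddCommGroup E] [NormedSpace ℂ E]
    [FiniteDimensional ℂ E] [NormedAddCommGroup F] [NormedSpace ℂ F] [CompleteSpace F]
    {X : Type*} [MeasurableSpace X] {μ : Measure X} (L : E →ₗ[ℂ] F) {f : X → E}
    (hf : Integrable f μ) : ∫ x, L (f x) ∂μ = L (∫ x, f x ∂μ) :=
  L.toContinuousLinearMap.integral_comp_comm hf

theorem Matrix.convex_setOf_posSemidef {n : Type*} :
    Convex ℝ {M : Matrix n n ℂ | M.PosSemidef} := by
  intro M hM N hN a b ha hb _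
  exact (hM.smul ha).add (hN.smul hb)

theorem Matrix.isClosed_setOf_posSemidef {n : Type*} [Fintype n] :
    IsClosed {M : Matrix n n ℂ | M.PosSemidef} := by
  simp_rw [Matrix.posSemidef_iff_dotProduct_mulVec, Set.ofPred_and, Set.ofPred_forall]
  refine (isClosed_eq continuous_id.matrix_conjTranspose continuous_id).inter
    (isClosed_iInter fun x => isClosed_le continuous_const ?_)
  fun_prop

theorem Matrix.PosSemidef.integral {n : Type*} [Fintype n] {X : Type*} [MeasurableSpace X]
    {μ : Measure X} [IsProbabilityMeasure μ] {f : X → Matrix n n ℂ} (hf : Integrable f μ)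
    (hpos : ∀ x, (f x).PosSemidef) : (∫ x, f x ∂μ).PosSemidef :=
  Matrix.convex_setOf_posSemidef.integral_mem Matrix.isClosed_setOf_posSemidef
    (Filter.Eventually.of_forall hpos) hf

theorem Continuous.matrix_kronecker {X R l m n p : Type*} [TopologicalSpace X]
    [TopologicalSpace R] [Mul R] [ContinuousMul R] {A : X → Matrix l m R}
    {B : X → Matrix n p R} (hA : Continuous A) (hB : Continuous B) :
    Continuous fun x => A x ⊗ₖ B x :=
  continuous_matrix fun _ _ => (hA.matrix_elem _ _).mul (hB.matrix_elem _ _)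

theorem conjTranspose_mul_outer_mul {n : Type*} [Fintype n] (Q : Matrix n n ℂ) (v : n → ℂ) :
    Qᴴ * outer v * Q = outer (Qᴴ *ᵥ v) := by
  rw [outer, outer, Matrix.mul_vecMulVec, Matrix.vecMulVec_mul, Matrix.star_mulVec,
    Matrix.conjTranspose_conjTranspose]

section PartialTrace

variable {α β : Type*} [Fintype α] [Fintype β]

def ptrLeftLinearMap : Matrix (α × β) (α × β) ℂ →ₗ[ℂ] Matrix β β ℂ where
  toFun := ptrLeft
  map_add' M N := by ext; simp [ptrLeft, Finset.sum_add_distrib]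
  map_smul' c M := by ext; simp [ptrLeft, Finset.mul_sum]

def ptrRightLinearMap : Matrix (α × β) (α × β) ℂ →ₗ[ℂ] Matrix α α ℂ where
  toFun := ptrRight
  map_add' M N := by ext; simp [ptrRight, Finset.sum_add_distrib]
  map_smul' c M := by ext; simp [ptrRight, Finset.mul_sum]

theorem ptrLeft_one_kronecker_mul [DecidableEq α] (B : Matrix β β ℂ)
    (M : Matrix (α × β) (α × β) ℂ) :
    ptrLeft (((1 : Matrix α α ℂ) ⊗ₖ B) * M) = B * ptrLeft M := by
  ext
  simp [ptrLeft, Matrix.mul_apply, Fintype.sum_prod_type, Matrix.one_apply, ite_mul,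
    Finset.mul_sum]
  exact Finset.sum_comm

theorem ptrLeft_mul_one_kronecker [DecidableEq α] (C : Matrix β β ℂ)
    (M : Matrix (α × β) (α × β) ℂ) :
    ptrLeft (M * ((1 : Matrix α α ℂ) ⊗ₖ C)) = ptrLeft M * C := by
  ext
  simp [ptrLeft, Matrix.mul_apply, Fintype.sum_prod_type, Matrix.one_apply, mul_ite,
    Finset.sum_mul]
  exact Finset.sum_comm

theorem ptrLeft_kronecker_one_mul_comm [DecidableEq β] (P : Matrix α α ℂ)
    (M : Matrix (α × β) (α × β) ℂ) :
    ptrLeft ((P ⊗ₖ (1 : Matrix β β ℂ)) * M) = ptrLeft (M * (P ⊗ₖ (1 : Matrix β β ℂ))) := by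
  ext
  simp [ptrLeft, Matrix.mul_apply, Fintype.sum_prod_type, Matrix.one_apply, mul_ite, ite_mul]
  rw [Finset.sum_comm]
  simp_rw [mul_comm]

theorem ptrRight_kronecker_one_mul [DecidableEq β] (P : Matrix α α ℂ)
    (M : Matrix (α × β) (α × β) ℂ) :
    ptrRight ((P ⊗ₖ (1 : Matrix β β ℂ)) * M) = P * ptrRight M := by
  ext
  simp [ptrRight, Matrix.mul_apply, Fintype.sum_prod_type, Matrix.one_apply, ite_mul,
    Finset.mul_sum]
  exact Finset.sum_comm

theorem ptrRight_mul_kronecker_one [DecidableEq β] (Q : Matrix α α ℂ)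
    (M : Matrix (α × β) (α × β) ℂ) :
    ptrRight (M * (Q ⊗ₖ (1 : Matrix β β ℂ))) = ptrRight M * Q := by
  ext
  simp [ptrRight, Matrix.mul_apply, Fintype.sum_prod_type, Matrix.one_apply, mul_ite,
    Finset.sum_mul]
  exact Finset.sum_comm

theorem ptrRight_one_kronecker_mul_comm [DecidableEq α] (B : Matrix β β ℂ)
    (M : Matrix (α × β) (α × β) ℂ) :
    ptrRight (((1 : Matrix α α ℂ) ⊗ₖ B) * M) = ptrRight (M * ((1 : Matrix α α ℂ) ⊗ₖ B)) := by
  ext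
  simp [ptrRight, Matrix.mul_apply, Fintype.sum_prod_type, Matrix.one_apply, mul_ite, ite_mul]
  rw [Finset.sum_comm]
  simp_rw [mul_comm]

variable [DecidableEq α] [DecidableEq β]

theorem ptrLeft_kronecker_conj_mul (P N : Matrix α α ℂ) (B : Matrix β β ℂ)
    (M : Matrix (α × β) (α × β) ℂ) :
    ptrLeft ((P ⊗ₖ B) * M * (P ⊗ₖ B)ᴴ * (N ⊗ₖ (1 : Matrix β β ℂ)))
      = B * ptrLeft (M * ((Pᴴ * N * P) ⊗ₖ (1 : Matrix β β ℂ))) * Bᴴ := by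
  have hsplit : (P ⊗ₖ B) * M * (P ⊗ₖ B)ᴴ * (N ⊗ₖ (1 : Matrix β β ℂ))
      = ((1 : Matrix α α ℂ) ⊗ₖ B) * ((P ⊗ₖ (1 : Matrix β β ℂ)) *
          (M * ((Pᴴ * N) ⊗ₖ (1 : Matrix β β ℂ)) * ((1 : Matrix α α ℂ) ⊗ₖ Bᴴ))) := by
    simp only [Matrix.conjTranspose_kronecker, ← mul_assoc, ← Matrix.mul_kronecker_mul,
      Matrix.one_mul, Matrix.mul_one]
    simp only [mul_assoc, ← Matrix.mul_kronecker_mul, Matrix.one_mul, Matrix.mul_one]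
  have hmove : M * ((Pᴴ * N) ⊗ₖ (1 : Matrix β β ℂ)) * ((1 : Matrix α α ℂ) ⊗ₖ Bᴴ) *
      (P ⊗ₖ (1 : Matrix β β ℂ))
      = M * ((Pᴴ * N * P) ⊗ₖ (1 : Matrix β β ℂ)) * ((1 : Matrix α α ℂ) ⊗ₖ Bᴴ) := by
    simp only [mul_assoc, ← Matrix.mul_kronecker_mul, Matrix.one_mul, Matrix.mul_one]
  rw [hsplit, ptrLeft_one_kronecker_mul, ptrLeft_kronecker_one_mul_comm, hmove,
    ptrLeft_mul_one_kronecker, ← mul_assoc]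

theorem ptrRight_kronecker_conj (P : Matrix α α ℂ) {B : Matrix β β ℂ} (hB : Bᴴ * B = 1)
    (M : Matrix (α × β) (α × β) ℂ) :
    ptrRight ((P ⊗ₖ B) * M * (P ⊗ₖ B)ᴴ) = P * ptrRight M * Pᴴ := by
  have hsplit : (P ⊗ₖ B) * M * (P ⊗ₖ B)ᴴ
      = (P ⊗ₖ (1 : Matrix β β ℂ)) * (((1 : Matrix α α ℂ) ⊗ₖ B) * M *
          ((1 : Matrix α α ℂ) ⊗ₖ Bᴴ)) * (Pᴴ ⊗ₖ (1 : Matrix β β ℂ)) := by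
    simp only [Matrix.conjTranspose_kronecker, ← mul_assoc, ← Matrix.mul_kronecker_mul,
      Matrix.one_mul, Matrix.mul_one]
    simp only [mul_assoc, ← Matrix.mul_kronecker_mul, Matrix.one_mul, Matrix.mul_one]
  rw [hsplit, ptrRight_mul_kronecker_one, ptrRight_kronecker_one_mul, mul_assoc _ M,
    ptrRight_one_kronecker_mul_comm, mul_assoc M, ← Matrix.mul_kronecker_mul, hB,
    Matrix.one_mul, Matrix.one_kronecker_one, Matrix.mul_one]

end PartialTrace

section Twirl

variable {G : Type*} [TopologicalSpace G] [CompactSpace G] [MeasurableSpace G]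
  [OpensMeasurableSpace G] (μ : Measure G) [IsProbabilityMeasure μ] {n : Type*} [Fintype n]

def twirl (ρ : G → Matrix n n ℂ) (M : Matrix n n ℂ) : Matrix n n ℂ :=
  ∫ g, ρ g * M * (ρ g)ᴴ ∂μ

variable {μ} {ρ : G → Matrix n n ℂ}

theorem integrable_mul_mul_conjTranspose (hρ : Continuous ρ) (M : Matrix n n ℂ) :
    Integrable (fun g => ρ g * M * (ρ g)ᴴ) μ :=
  ((hρ.matrix_mul continuous_const).matrix_mul
    hρ.matrix_conjTranspose).integrable_of_hasCompactSupport (.of_compactSpace _)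

theorem map_twirl {F : Type*} [NormedAddCommGroup F] [NormedSpace ℂ F] [CompleteSpace F]
    (hρ : Continuous ρ) (L : Matrix n n ℂ →ₗ[ℂ] F) (M : Matrix n n ℂ) :
    L (twirl μ ρ M) = ∫ g, L (ρ g * M * (ρ g)ᴴ) ∂μ :=
  (L.integral_comp_comm (integrable_mul_mul_conjTranspose hρ M)).symm

theorem map_twirl_eq_of_forall {F : Type*} [NormedAddCommGroup F] [NormedSpace ℂ F]
    [CompleteSpace F] (hρ : Continuous ρ) (L : Matrix n n ℂ →ₗ[ℂ] F) {M : Matrix n n ℂ}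
    {N : F} (h : ∀ g, L (ρ g * M * (ρ g)ᴴ) = N) : L (twirl μ ρ M) = N := by
  simp [map_twirl hρ, h]

theorem map_twirl_of_equivariant {m : Type*} [Fintype m] {ρ' : G → Matrix m m ℂ}
    (hρ : Continuous ρ) (L : Matrix n n ℂ →ₗ[ℂ] Matrix m m ℂ) {M : Matrix n n ℂ}
    (h : ∀ g, L (ρ g * M * (ρ g)ᴴ) = ρ' g * L M * (ρ' g)ᴴ) :
    L (twirl μ ρ M) = twirl μ ρ' (L M) := by
  simp only [map_twirl hρ, h]
  rfl

theorem twirl_kronecker_one {m : Type*} [Fintype m] [DecidableEq m] (hρ : Continuous ρ)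
    (M : Matrix n n ℂ) :
    twirl μ (fun g => ρ g ⊗ₖ (1 : Matrix m m ℂ)) (M ⊗ₖ 1) = twirl μ ρ M ⊗ₖ 1 := by
  refine (map_twirl_of_equivariant hρ ((Matrix.kroneckerBilinear (R := ℂ)).flip 1)
    fun g => ?_).symm
  show (ρ g * M * (ρ g)ᴴ) ⊗ₖ 1 = (ρ g ⊗ₖ 1) * (M ⊗ₖ 1) * (ρ g ⊗ₖ (1 : Matrix m m ℂ))ᴴ
  rw [Matrix.conjTranspose_kronecker, Matrix.conjTranspose_one, ← Matrix.mul_kronecker_mul,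
    ← Matrix.mul_kronecker_mul, Matrix.mul_one, Matrix.mul_one]

theorem twirl_sub (hρ : Continuous ρ) (M N : Matrix n n ℂ) :
    twirl μ ρ (M - N) = twirl μ ρ M - twirl μ ρ N := by
  rw [twirl, twirl, twirl, ← integral_sub (integrable_mul_mul_conjTranspose hρ M)
    (integrable_mul_mul_conjTranspose hρ N)]
  simp only [Matrix.mul_sub, Matrix.sub_mul]

theorem posSemidef_twirl (hρ : Continuous ρ) {M : Matrix n n ℂ} (hM : M.PosSemidef) :
    (twirl μ ρ M).PosSemidef :=
  .integral (integrable_mul_mul_conjTranspose hρ M) fun _ => hM.mul_mul_conjTranspose_same _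

theorem trace_twirl [DecidableEq n] (hρ : Continuous ρ)
    (hu : ∀ g, ρ g ∈ Matrix.unitaryGroup n ℂ) (M : Matrix n n ℂ) :
    (twirl μ ρ M).trace = M.trace :=
  map_twirl_eq_of_forall hρ (Matrix.traceLinearMap n ℂ ℂ) fun g => by
    rw [Matrix.traceLinearMap_apply, Matrix.trace_mul_cycle, ← Matrix.star_eq_conjTranspose,
      Matrix.mem_unitaryGroup_iff'.mp (hu g), Matrix.one_mul]

theorem commute_twirl {G : Type*} [Group G] [TopologicalSpace G] [IsTopologicalGroup G]
    [CompactSpace G] [MeasurableSpace G] [BorelSpace G] {μ : Measure G}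
    [IsProbabilityMeasure μ] [μ.IsMulLeftInvariant] [DecidableEq n] {ρ : G →* Matrix n n ℂ}
    (hρ : Continuous ρ) (hu : ∀ g, ρ g ∈ Matrix.unitaryGroup n ℂ) (M : Matrix n n ℂ) (h : G) :
    Commute (ρ h) (twirl μ ρ M) := by
  have hL := map_twirl (μ := μ) hρ (LinearMap.mulLeft ℂ (ρ h)) M
  have hR := map_twirl (μ := μ) hρ (LinearMap.mulRight ℂ (ρ h)) M
  simp only [LinearMap.mulLeft_apply, LinearMap.mulRight_apply] at hL hR
  rw [Commute, SemiconjBy, hL, hR,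
    ← integral_mul_left_eq_self (fun g => ρ g * M * (ρ g)ᴴ * ρ h) h]
  congr 1 with g
  have hh : (ρ h)ᴴ * ρ h = 1 := Matrix.mem_unitaryGroup_iff'.mp (hu h)
  simp only [map_mul, Matrix.conjTranspose_mul, mul_assoc, hh, mul_one]

end Twirl

instance {G : Type*} [Group G] [TopologicalSpace G] [IsTopologicalGroup G] [CompactSpace G]
    [MeasurableSpace G] [BorelSpace G] :
    IsProbabilityMeasure (Measure.haarMeasure (⊤ : TopologicalSpace.PositiveCompacts G)) :=
  ⟨by simpa using Measure.haarMeasure_self (K₀ := (⊤ : TopologicalSpace.PositiveCompacts G))⟩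

section SpecialUnitaryGroup

variable {n : Type*} [Fintype n] [DecidableEq n]

instance : IsTopologicalGroup (Matrix.specialUnitaryGroup n ℂ) where
  continuous_inv := continuous_subtype_val.star.subtype_mk _

instance : CompactSpace (Matrix.specialUnitaryGroup n ℂ) := by
  have hclosed : IsClosed (Matrix.specialUnitaryGroup n ℂ : Set (Matrix n n ℂ)) :=
    isClosed_unitary.inter (isClosed_eq continuous_id.matrix_det continuous_const)
  have hbounded : (Matrix.specialUnitaryGroup n ℂ : Set (Matrix n n ℂ)) ⊆
      Set.univ.pi fun _ => Set.univ.pi fun _ => Metric.closedBall (0 : ℂ) 1 := fun U hU =>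
    Set.mem_univ_pi.2 fun i => Set.mem_univ_pi.2 fun j => by
      simpa using entry_norm_bound_of_unitary hU.1 i j
  exact isCompact_iff_compactSpace.mp <|
    (isCompact_univ_pi fun _ => isCompact_univ_pi fun _ => isCompact_closedBall _ _)
      |>.of_isClosed_subset hclosed hbounded

instance : MeasurableSpace (Matrix.specialUnitaryGroup n ℂ) := borel _

instance : BorelSpace (Matrix.specialUnitaryGroup n ℂ) := ⟨rfl⟩

end SpecialUnitaryGroup

section TensorPower

variable {d : ℕ} (k : ℕ)

theorem UkMat_mul (U V : Matrix (Fin d) (Fin d) ℂ) :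
    UkMat k (U * V) = UkMat k U * UkMat k V := by
  ext i i'
  simp only [UkMat, Matrix.mul_apply]
  rw [Finset.prod_univ_sum, Fintype.piFinset_univ]
  exact Finset.sum_congr rfl fun _ _ => Finset.prod_mul_distrib

theorem UkMat_one : UkMat k (1 : Matrix (Fin d) (Fin d) ℂ) = 1 := by
  ext i i'
  by_cases h : i = i'
  · subst h
    simp [UkMat]
  · obtain ⟨j, hj⟩ := Function.ne_iff.mp h
    rw [Matrix.one_apply_ne h]
    exact Finset.prod_eq_zero (Finset.mem_univ j) (Matrix.one_apply_ne hj)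

theorem UkMat_conjTranspose (U : Matrix (Fin d) (Fin d) ℂ) : (UkMat k U)ᴴ = UkMat k Uᴴ := by
  ext
  simp [UkMat, Matrix.conjTranspose_apply, star_prod]

theorem UkMat_transpose (U : Matrix (Fin d) (Fin d) ℂ) : (UkMat k U)ᵀ = UkMat k Uᵀ :=
  rfl

theorem continuous_UkMat : Continuous (UkMat k : Matrix (Fin d) (Fin d) ℂ → _) :=
  continuous_matrix fun _ _ => continuous_finsetProd _ fun _ _ => continuous_id.matrix_elem _ _

def UkMatHom : Matrix (Fin d) (Fin d) ℂ →⋆* Matrix (Fin k → Fin d) (Fin k → Fin d) ℂ where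
  toFun := UkMat k
  map_one' := UkMat_one k
  map_mul' := UkMat_mul k
  map_star' U := (UkMat_conjTranspose k U).symm

theorem mconj_mul (U V : Matrix (Fin d) (Fin d) ℂ) : mconj (U * V) = mconj U * mconj V :=
  Matrix.map_mul

theorem conjTranspose_mconj (U : Matrix (Fin d) (Fin d) ℂ) : (mconj U)ᴴ = Uᵀ := by
  ext
  simp [mconj]

theorem mconj_conjTranspose (U : Matrix (Fin d) (Fin d) ℂ) : mconj Uᴴ = Uᵀ := by
  ext
  simp [mconj]

theorem transpose_conjTranspose_eq_mconj (U : Matrix (Fin d) (Fin d) ℂ) : Uᴴᵀ = mconj U :=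
  rfl

theorem mconj_mem_unitaryGroup {U : Matrix (Fin d) (Fin d) ℂ}
    (hU : U ∈ Matrix.unitaryGroup (Fin d) ℂ) : mconj U ∈ Matrix.unitaryGroup (Fin d) ℂ :=
  Matrix.map_star_mem_unitaryGroup_iff.mpr hU

def symTransHom : Matrix (Fin d) (Fin d) ℂ →⋆*
    Matrix (((Fin k → Fin d) × (Fin k → Fin d)) × Fin d)
      (((Fin k → Fin d) × (Fin k → Fin d)) × Fin d) ℂ where
  toFun := symTrans k
  map_one' := by simp [symTrans, UkMat_one, mconj]
  map_mul' U V := by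
    simp only [symTrans, UkMat_mul, mconj_mul, ← Matrix.mul_kronecker_mul, Matrix.one_mul]
  map_star' U := by
    simp only [symTrans, Matrix.star_eq_conjTranspose, Matrix.conjTranspose_kronecker,
      UkMat_conjTranspose, Matrix.conjTranspose_one, conjTranspose_mconj, mconj_conjTranspose]

theorem continuous_symTrans : Continuous (symTrans k : Matrix (Fin d) (Fin d) ℂ → _) :=
  ((continuous_UkMat k).matrix_kronecker continuous_const).matrix_kronecker
    (continuous_id.matrix_map continuous_star)

end TensorPower

section Protocol

variable {d k : ℕ}

theorem choiProjK_eq_outer_vec (W : Matrix (Fin d) (Fin d) ℂ) :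
    choiProjK k W = outer (Matrix.vec (UkMat k W)) := by
  ext
  simp [choiProjK, choiProj, outer, choiVec, Matrix.vec, UkMat, Matrix.vecMulVec_apply,
    Finset.prod_mul_distrib]

theorem conj_choiProjK (U V : Matrix (Fin d) (Fin d) ℂ) :
    (UkMat k V ⊗ₖ (1 : Matrix (Fin k → Fin d) (Fin k → Fin d) ℂ))ᴴ * choiProjK k (mconj U) *
        (UkMat k V ⊗ₖ (1 : Matrix (Fin k → Fin d) (Fin k → Fin d) ℂ))
      = choiProjK k (mconj (U * V)) := by
  rw [choiProjK_eq_outer_vec, choiProjK_eq_outer_vec, conjTranspose_mul_outer_mul,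
    Matrix.conjTranspose_kronecker, Matrix.conjTranspose_one, Matrix.kronecker_mulVec_vec,
    Matrix.one_mul, UkMat_conjTranspose, UkMat_transpose, transpose_conjTranspose_eq_mconj,
    ← UkMat_mul, ← mconj_mul]

theorem actK_symTrans_conj
    (S : Matrix (((Fin k → Fin d) × (Fin k → Fin d)) × Fin d)
      (((Fin k → Fin d) × (Fin k → Fin d)) × Fin d) ℂ) (U V : Matrix (Fin d) (Fin d) ℂ) :
    actK (symTrans k V * S * (symTrans k V)ᴴ) U = mconj V * actK S (U * V) * (mconj V)ᴴ := by
  rw [actK, symTrans, ptrLeft_kronecker_conj_mul, conj_choiProjK]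
  rfl

theorem ptrRight_symTrans_conj {V : Matrix (Fin d) (Fin d) ℂ}
    (hV : V ∈ Matrix.unitaryGroup (Fin d) ℂ)
    (M : Matrix (((Fin k → Fin d) × (Fin k → Fin d)) × Fin d)
      (((Fin k → Fin d) × (Fin k → Fin d)) × Fin d) ℂ) :
    ptrRight (symTrans k V * M * (symTrans k V)ᴴ)
      = (UkMat k V ⊗ₖ (1 : Matrix (Fin k → Fin d) (Fin k → Fin d) ℂ)) * ptrRight M *
        (UkMat k V ⊗ₖ (1 : Matrix (Fin k → Fin d) (Fin k → Fin d) ℂ))ᴴ :=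
  ptrRight_kronecker_conj _ (Matrix.mem_unitaryGroup_iff'.mp (mconj_mem_unitaryGroup hV)) M

theorem mconj_mul_transpose_mul_mconj_mul {V : Matrix (Fin d) (Fin d) ℂ}
    (hV : V ∈ Matrix.unitaryGroup (Fin d) ℂ) (U A : Matrix (Fin d) (Fin d) ℂ) :
    mconj V * ((U * V)ᵀ * A * mconj (U * V)) * (mconj V)ᴴ = Uᵀ * A * mconj U := by
  have h : mconj V * Vᵀ = 1 := by
    rw [← conjTranspose_mconj]
    exact Matrix.mem_unitaryGroup_iff.mp (mconj_mem_unitaryGroup hV)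
  rw [Matrix.transpose_mul, mconj_mul, conjTranspose_mconj]
  simp only [← mul_assoc, h, Matrix.one_mul]
  simp only [mul_assoc, h, Matrix.mul_one]

def actKLinearMap (U : Matrix (Fin d) (Fin d) ℂ) :
    Matrix (((Fin k → Fin d) × (Fin k → Fin d)) × Fin d)
      (((Fin k → Fin d) × (Fin k → Fin d)) × Fin d) ℂ →ₗ[ℂ] Matrix (Fin d) (Fin d) ℂ where
  toFun S := actK S U
  map_add' S T := by
    simp only [actK, Matrix.add_mul]
    exact ptrLeftLinearMap.map_add _ _
  map_smul' c S := by
    simp only [actK, Matrix.smul_mul]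
    exact ptrLeftLinearMap.map_smul _ _

theorem actKLinearMap_apply (U : Matrix (Fin d) (Fin d) ℂ)
    (S : Matrix (((Fin k → Fin d) × (Fin k → Fin d)) × Fin d)
      (((Fin k → Fin d) × (Fin k → Fin d)) × Fin d) ℂ) :
    actKLinearMap U S = actK S U :=
  rfl

end Protocol

section Covariantization

variable {d : ℕ} (k : ℕ)

def symTransRep : Matrix.specialUnitaryGroup (Fin d) ℂ →*
    Matrix (((Fin k → Fin d) × (Fin k → Fin d)) × Fin d)
      (((Fin k → Fin d) × (Fin k → Fin d)) × Fin d) ℂ :=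
  (symTransHom k).toMonoidHom.comp (Matrix.specialUnitaryGroup (Fin d) ℂ).subtype

def UkMatRep :
    Matrix.specialUnitaryGroup (Fin d) ℂ →* Matrix (Fin k → Fin d) (Fin k → Fin d) ℂ :=
  (UkMatHom k).toMonoidHom.comp (Matrix.specialUnitaryGroup (Fin d) ℂ).subtype

theorem continuous_symTransRep : Continuous (symTransRep (d := d) k) :=
  (continuous_symTrans k).comp continuous_subtype_val

theorem continuous_UkMatRep : Continuous (UkMatRep (d := d) k) :=
  (continuous_UkMat k).comp continuous_subtype_val

theorem symTransRep_mem_unitaryGroup (V : Matrix.specialUnitaryGroup (Fin d) ℂ) :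
    symTransRep k V ∈ Matrix.unitaryGroup _ ℂ :=
  Unitary.map_mem (symTransHom k) V.2.1

theorem UkMatRep_mem_unitaryGroup (V : Matrix.specialUnitaryGroup (Fin d) ℂ) :
    UkMatRep k V ∈ Matrix.unitaryGroup _ ℂ :=
  Unitary.map_mem (UkMatHom k) V.2.1

variable {k} (μ : Measure (Matrix.specialUnitaryGroup (Fin d) ℂ)) [IsProbabilityMeasure μ]

theorem isProtocolK_twirl
    {S Sch : Matrix (((Fin k → Fin d) × (Fin k → Fin d)) × Fin d)
      (((Fin k → Fin d) × (Fin k → Fin d)) × Fin d) ℂ} (hprot : IsProtocolK S Sch) :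
    IsProtocolK (twirl μ (symTransRep k) S) (twirl μ (symTransRep k) Sch) := by
  obtain ⟨hS, hdiff, σ, hσ, hσtr, hSch⟩ := hprot
  have hρ := continuous_symTransRep (d := d) k
  have hρI := continuous_UkMatRep (d := d) k
  refine ⟨posSemidef_twirl hρ hS, ?_, twirl μ (UkMatRep k) σ, posSemidef_twirl hρI hσ,
    (trace_twirl hρI (UkMatRep_mem_unitaryGroup k) σ).trans hσtr, ?_⟩
  · rw [← twirl_sub hρ]
    exact posSemidef_twirl hρ hdiff
  · calc ptrRight (twirl μ (symTransRep k) Sch)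
        = twirl μ (fun V => UkMatRep k V ⊗ₖ 1) (ptrRight Sch) :=
          map_twirl_of_equivariant hρ ptrRightLinearMap fun V =>
            ptrRight_symTrans_conj V.2.1 Sch
      _ = twirl μ (UkMatRep k) σ ⊗ₖ 1 := by rw [hSch, twirl_kronecker_one hρI]

theorem actK_twirl_eq {p : ℂ} {ψ : Fin d → ℂ}
    {S : Matrix (((Fin k → Fin d) × (Fin k → Fin d)) × Fin d)
      (((Fin k → Fin d) × (Fin k → Fin d)) × Fin d) ℂ}
    (htarget : ∀ U ∈ Matrix.specialUnitaryGroup (Fin d) ℂ,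
      actK S U = p • (Uᵀ * outer ψ * mconj U))
    {U : Matrix (Fin d) (Fin d) ℂ} (hU : U ∈ Matrix.specialUnitaryGroup (Fin d) ℂ) :
    actK (twirl μ (symTransRep k) S) U = p • (Uᵀ * outer ψ * mconj U) := by
  refine map_twirl_eq_of_forall (continuous_symTransRep k) (actKLinearMap U) fun V => ?_
  rw [actKLinearMap_apply, show symTransRep k V = symTrans k V from rfl, actK_symTrans_conj,
    htarget _ (mul_mem hU V.2), Matrix.mul_smul, Matrix.smul_mul,
    mconj_mul_transpose_mul_mconj_mul V.2.1]

end Covariantization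

theorem covariant_protocol_without_loss_general
    (d k : ℕ) (p : ℝ)
    (ψ : Fin d → ℂ)
    (S Sch : Matrix (((Fin k → Fin d) × (Fin k → Fin d)) × Fin d)
        (((Fin k → Fin d) × (Fin k → Fin d)) × Fin d) ℂ)
    (hprot : IsProtocolK S Sch)
    (htarget : ∀ U : Matrix (Fin d) (Fin d) ℂ, U ∈ Matrix.specialUnitaryGroup (Fin d) ℂ →
      actK S U = (p : ℂ) • (Uᵀ * outer ψ * mconj U)) :
    ∃ Sc Scch : Matrix (((Fin k → Fin d) × (Fin k → Fin d)) × Fin d)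
        (((Fin k → Fin d) × (Fin k → Fin d)) × Fin d) ℂ,
      IsProtocolK Sc Scch ∧
      (∀ U : Matrix (Fin d) (Fin d) ℂ, U ∈ Matrix.specialUnitaryGroup (Fin d) ℂ →
        actK Sc U = (p : ℂ) • (Uᵀ * outer ψ * mconj U)) ∧
      (∀ U : Matrix (Fin d) (Fin d) ℂ, U ∈ Matrix.specialUnitaryGroup (Fin d) ℂ →
        Sc * symTrans k U = symTrans k U * Sc) := by
  let μ : Measure (Matrix.specialUnitaryGroup (Fin d) ℂ) := Measure.haarMeasure ⊤
  exact ⟨twirl μ (symTransRep k) S, twirl μ (symTransRep k) Sch, isProtocolK_twirl μ hprot,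
    fun U hU => actK_twirl_eq μ htarget hU, fun U hU =>
      (commute_twirl (continuous_symTransRep k) (symTransRep_mem_unitaryGroup k) S ⟨U, hU⟩).eq.symm⟩

/-- **Covariance without loss of performance (transposition).** Any parallel
`k`-call protocol implementing `U ↦ p·Uᵀ|ψ⟩⟨ψ|U̅` for all `U ∈ SU(d)` can be
replaced by one whose success element commutes with `U^{⊗k} ⊗ 1_O ⊗ U̅` for every
`U ∈ SU(d)`, achieving the same probability `p`. -/
theorem covariant_protocol_without_loss
    (d k : ℕ) (hd : 2 ≤ d) (hk : 1 ≤ k) (p : ℝ)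
    (ψ : Fin d → ℂ) (hψ : star ψ ⬝ᵥ ψ = 1)
    (S Sch : Matrix (((Fin k → Fin d) × (Fin k → Fin d)) × Fin d)
        (((Fin k → Fin d) × (Fin k → Fin d)) × Fin d) ℂ)
    (hprot : IsProtocolK S Sch)
    (htarget : ∀ U : Matrix (Fin d) (Fin d) ℂ, U ∈ Matrix.specialUnitaryGroup (Fin d) ℂ →
      actK S U = (p : ℂ) • (Uᵀ * outer ψ * mconj U)) :
    ∃ Sc Scch : Matrix (((Fin k → Fin d) × (Fin k → Fin d)) × Fin d)
        (((Fin k → Fin d) × (Fin k → Fin d)) × Fin d) ℂ,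
      IsProtocolK Sc Scch ∧
      (∀ U : Matrix (Fin d) (Fin d) ℂ, U ∈ Matrix.specialUnitaryGroup (Fin d) ℂ →
        actK Sc U = (p : ℂ) • (Uᵀ * outer ψ * mconj U)) ∧
      (∀ U : Matrix (Fin d) (Fin d) ℂ, U ∈ Matrix.specialUnitaryGroup (Fin d) ℂ →
        Sc * symTrans k U = symTrans k U * Sc) :=
  covariant_protocol_without_loss_general d k p ψ S Sch hprot htarget
end
end
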